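/- Let φ be an inner function such that the radial boundary values of φ' are essentially bounded on ∂𝔻 (equivalently φ' ∈ H^∞(𝔻)). Then φ is a finite Blaschke product. -/

import Mathlib

open Complex Filter Set MeasureTheory Topology

/-- The open unit disk in ℂ. -/
noncomputable def unitDisk : Set ℂ := Metric.ball 0 1

/-- The α-hyperbolic distortion of φ at z. -/
noncomputable def tau (φ : ℂ → ℂ) (α : ℝ) (z : ℂ) : ℝ :=
  (1 - ‖z‖ ^ 2) ^ α * ‖deriv φ z‖ /
    (1 - ‖φ z‖ ^ 2) ^ α

/-- The Stolz (non-tangential) region at ζ with aperture γ. -/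
noncomputable def stolz (γ : ℝ) (ζ : ℂ) : Set ℂ :=
  {z ∈ unitDisk | ‖ζ - z‖ ≤ γ * (1 - ‖z‖ ^ 2)}

/-- φ is a finite Blaschke product on the unit disk. -/
def IsFiniteBlaschke (φ : ℂ → ℂ) : Prop :=
  ∃ (n : ℕ) (l : ℂ) (a : Fin n → ℂ), ‖l‖ = 1 ∧
    (∀ k, ‖a k‖ < 1) ∧
    ∀ z ∈ unitDisk, φ z = l * ∏ k, (a k - z) / (1 - (starRingEnd ℂ) (a k) * z)

/-!
A bounded derivative makes `φ` Lipschitz on the disk, so `φ` extends continuously to the closed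
disk; the a.e. unimodular radial limits and continuity then give `‖φ‖ = 1` on the whole circle,
hence the zeros of `φ` lie in a disk of radius `r < 1`. Dividing a function of this class
(holomorphic inside, continuous up to the circle, unimodular on it) by the Blaschke factor of one
of its zeros stays in the class, and a zero-free member is a unimodular constant (maximum
principle for `f` and `1 / f`). If the division never stopped, then at a point `z₀` with
`r < ‖z₀‖ < 1` we would get `‖φ z₀‖ ≤ ∏ k < n, ‖b_{a k} z₀‖` for every `n`, where the identity
`‖1 - conj a * z‖² - ‖a - z‖² = (1 - ‖a‖²) (1 - ‖z‖²)` bounds each factor by a constant `< 1`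
independent of `n`; but `φ z₀ ≠ 0`.
-/

open Metric ComplexConjugate

noncomputable def blaschkeFactor (a z : ℂ) : ℂ := (a - z) / (1 - conj a * z)

theorem norm_one_sub_conj_mul_sq (a z : ℂ) :
    ‖1 - conj a * z‖ ^ 2 = ‖a - z‖ ^ 2 + (1 - ‖a‖ ^ 2) * (1 - ‖z‖ ^ 2) := by
  simp only [Complex.sq_norm, normSq_apply, sub_re, sub_im, mul_re, mul_im, conj_re, conj_im,
    one_re, one_im]
  ring

theorem one_sub_conj_mul_ne_zero {a z : ℂ} (ha : ‖a‖ < 1) (hz : ‖z‖ ≤ 1) :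
    1 - conj a * z ≠ 0 := by
  intro h
  have h1 : ‖conj a * z‖ = 1 := by rw [← sub_eq_zero.1 h, norm_one]
  rw [norm_mul, norm_conj] at h1
  nlinarith [norm_nonneg a, norm_nonneg z]

theorem norm_blaschkeFactor_of_norm_eq_one {a z : ℂ} (ha : ‖a‖ < 1) (hz : ‖z‖ = 1) :
    ‖blaschkeFactor a z‖ = 1 := by
  have hD := one_sub_conj_mul_ne_zero ha hz.le
  have hsq := norm_one_sub_conj_mul_sq a z
  rw [hz, one_pow, sub_self, mul_zero, add_zero] at hsq
  rw [blaschkeFactor, norm_div, div_eq_one_iff_eq (norm_ne_zero_iff.2 hD)]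
  exact (pow_left_inj₀ (norm_nonneg _) (norm_nonneg _) two_ne_zero).1 hsq.symm

theorem norm_blaschkeFactor_sq_le {a z : ℂ} {r : ℝ} (ha : ‖a‖ ≤ r) (hr : r < 1) (hz : ‖z‖ < 1) :
    ‖blaschkeFactor a z‖ ^ 2 ≤ 1 - (1 - r ^ 2) * (1 - ‖z‖ ^ 2) / 4 := by
  set D := 1 - conj a * z
  have hD : 0 < ‖D‖ ^ 2 := by
    have := one_sub_conj_mul_ne_zero (ha.trans_lt hr) hz.le
    positivity
  have hD4 : ‖D‖ ^ 2 ≤ 4 := by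
    have : ‖D‖ ≤ 2 := by
      calc ‖D‖ ≤ ‖(1 : ℂ)‖ + ‖conj a * z‖ := norm_sub_le _ _
        _ ≤ 2 := by
          rw [norm_one, norm_mul, norm_conj]
          nlinarith [norm_nonneg a, norm_nonneg z]
    nlinarith [norm_nonneg D]
  have hsq := norm_one_sub_conj_mul_sq a z
  have hra : 1 - r ^ 2 ≤ 1 - ‖a‖ ^ 2 := by nlinarith [norm_nonneg a]
  have hr2 : 0 ≤ 1 - r ^ 2 := by nlinarith [norm_nonneg a]
  have hz2 : 0 ≤ 1 - ‖z‖ ^ 2 := by nlinarith [norm_nonneg z]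
  -- `‖blaschkeFactor a z‖ ^ 2 = 1 - (1 - ‖a‖ ^ 2) * (1 - ‖z‖ ^ 2) / ‖D‖ ^ 2` and `‖D‖ ≤ 2`
  rw [blaschkeFactor, norm_div, div_pow, div_le_iff₀ hD]
  nlinarith [mul_le_mul_of_nonneg_right hra hz2, mul_nonneg hr2 hz2,
    mul_le_mul_of_nonneg_left hD4 (mul_nonneg hr2 hz2)]

theorem IsFiniteBlaschke.congr {f g : ℂ → ℂ} (hg : IsFiniteBlaschke g)
    (hfg : ∀ z ∈ unitDisk, f z = g z) : IsFiniteBlaschke f := by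
  obtain ⟨n, l, a, hl, ha, hga⟩ := hg
  exact ⟨n, l, a, hl, ha, fun z hz => (hfg z hz).trans (hga z hz)⟩

theorem DiffContOnCl.dslope {E : Type*} [NormedAddCommGroup E] [NormedSpace ℂ E] [CompleteSpace E]
    {f : ℂ → E} {s : Set ℂ} {a : ℂ} (hf : DiffContOnCl ℂ f s) (hs : IsOpen s) (ha : a ∈ s) :
    DiffContOnCl ℂ (dslope f a) s :=
  ⟨(differentiableOn_dslope (hs.mem_nhds ha)).2 hf.differentiableOn,
    (continuousOn_dslope (Filter.mem_of_superset (hs.mem_nhds ha) subset_closure)).2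
      ⟨hf.continuousOn, hf.differentiableAt hs ha⟩⟩

structure IsContinuousInner (f : ℂ → ℂ) : Prop where
  diffContOnCl : DiffContOnCl ℂ f (ball 0 1)
  norm_eq_one : ∀ z ∈ sphere (0 : ℂ) 1, ‖f z‖ = 1

namespace IsContinuousInner

variable {f : ℂ → ℂ}

theorem norm_le_one (hf : IsContinuousInner f) {z : ℂ} (hz : z ∈ closedBall (0 : ℂ) 1) :
    ‖f z‖ ≤ 1 := by
  refine norm_le_of_forall_mem_frontier_norm_le isBounded_ball hf.diffContOnCl
    (fun w hw => (hf.norm_eq_one w ?_).le) ?_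
  · rwa [frontier_ball (0 : ℂ) one_ne_zero] at hw
  · rwa [closure_ball (0 : ℂ) one_ne_zero]

theorem ne_zero_of_mem_closedBall (hf : IsContinuousInner f)
    (h0 : ∀ z ∈ ball (0 : ℂ) 1, f z ≠ 0) {z : ℂ} (hz : z ∈ closedBall (0 : ℂ) 1) : f z ≠ 0 := by
  rcases (mem_closedBall_zero_iff.1 hz).lt_or_eq with hz | hz
  · exact h0 z (mem_ball_zero_iff.2 hz)
  · exact norm_ne_zero_iff.1 (by rw [hf.norm_eq_one z (mem_sphere_zero_iff_norm.2 hz)]; simp)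

theorem inv (hf : IsContinuousInner f) (h0 : ∀ z ∈ ball (0 : ℂ) 1, f z ≠ 0) :
    IsContinuousInner f⁻¹ where
  diffContOnCl := hf.diffContOnCl.inv fun z hz =>
    hf.ne_zero_of_mem_closedBall h0 (by rwa [closure_ball (0 : ℂ) one_ne_zero] at hz)
  norm_eq_one z hz := by simp [norm_inv, hf.norm_eq_one z hz]

theorem exists_eqOn_const (hf : IsContinuousInner f) (h0 : ∀ z ∈ ball (0 : ℂ) 1, f z ≠ 0) :
    ∃ l : ℂ, ‖l‖ = 1 ∧ EqOn f (fun _ => l) (ball 0 1) := by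
  have hnorm : ∀ z ∈ ball (0 : ℂ) 1, ‖f z‖ = 1 := by
    intro z hz
    have hinv := (hf.inv h0).norm_le_one (ball_subset_closedBall hz)
    rw [Pi.inv_apply, norm_inv, inv_le_one₀ (norm_pos_iff.2 (h0 z hz))] at hinv
    exact (hf.norm_le_one (ball_subset_closedBall hz)).antisymm hinv
  have h00 : (0 : ℂ) ∈ ball (0 : ℂ) 1 := mem_ball_self one_pos
  refine ⟨f 0, hnorm 0 h00, eqOn_of_isPreconnected_of_isMaxOn_norm
    (convex_ball 0 1).isPreconnected isOpen_ball hf.diffContOnCl.differentiableOn h00 ?_⟩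
  intro z hz
  simp [hnorm z hz, hnorm 0 h00]

theorem exists_zeros_subset_ball (hf : IsContinuousInner f) :
    ∃ r ∈ Ioo (0 : ℝ) 1, ∀ z ∈ ball (0 : ℂ) 1, f z = 0 → ‖z‖ < r := by
  have hcont : ContinuousOn f (closedBall 0 1) := by
    simpa [closure_ball (0 : ℂ) one_ne_zero] using hf.diffContOnCl.continuousOn
  have hsub : closedBall (0 : ℂ) 1 ∩ f ⁻¹' {0} ⊆ ball 0 1 := by
    rintro z ⟨hz, hfz : f z = 0⟩
    refine mem_ball_zero_iff.2 ((mem_closedBall_zero_iff.1 hz).lt_of_ne fun h => ?_)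
    simpa [hfz] using hf.norm_eq_one z (mem_sphere_zero_iff_norm.2 h)
  obtain ⟨r, hr, hZ⟩ := exists_pos_lt_subset_ball one_pos
    (hcont.preimage_isClosed_of_isClosed isClosed_closedBall isClosed_singleton) hsub
  exact ⟨r, hr, fun z hz hfz => mem_ball_zero_iff.1 (hZ ⟨ball_subset_closedBall hz, hfz⟩)⟩

theorem exists_blaschkeFactor_mul (hf : IsContinuousInner f) {a : ℂ} (ha : a ∈ ball (0 : ℂ) 1)
    (hfa : f a = 0) :
    ∃ g : ℂ → ℂ, IsContinuousInner g ∧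
      ∀ z ∈ closedBall (0 : ℂ) 1, f z = blaschkeFactor a z * g z := by
  have hfactor : ∀ z ∈ closedBall (0 : ℂ) 1,
      f z = blaschkeFactor a z * (-(1 - conj a * z) * dslope f a z) := by
    intro z hz
    have hD := one_sub_conj_mul_ne_zero (mem_ball_zero_iff.1 ha) (mem_closedBall_zero_iff.1 hz)
    have hslope := sub_smul_dslope f a z
    rw [hfa, sub_zero, smul_eq_mul] at hslope
    rw [blaschkeFactor, ← hslope, div_mul_eq_mul_div, eq_div_iff hD]
    ring
  refine ⟨fun z => -(1 - conj a * z) * dslope f a z, ⟨?_, fun z hz => ?_⟩, hfactor⟩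
  · exact (by fun_prop : Differentiable ℂ fun z => -(1 - conj a * z)).diffContOnCl.smul
      (hf.diffContOnCl.dslope isOpen_ball ha)
  · have hz1 := mem_sphere_zero_iff_norm.1 hz
    have := hf.norm_eq_one z hz
    rwa [hfactor z (sphere_subset_closedBall hz), norm_mul,
      norm_blaschkeFactor_of_norm_eq_one (mem_ball_zero_iff.1 ha) hz1, one_mul] at this

theorem exists_prod_blaschkeFactor_mul (hf : IsContinuousInner f) (hfB : ¬IsFiniteBlaschke f)
    (n : ℕ) :
    ∃ (a : Fin n → ℂ) (g : ℂ → ℂ), (∀ k, a k ∈ ball (0 : ℂ) 1 ∧ f (a k) = 0) ∧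
      IsContinuousInner g ∧ ∀ z ∈ ball (0 : ℂ) 1, f z = (∏ k, blaschkeFactor (a k) z) * g z := by
  induction n with
  | zero => exact ⟨Fin.elim0, f, fun k => k.elim0, hf, fun z _ => by simp⟩
  | succ n ih =>
    obtain ⟨a, g, ha, hg, hfg⟩ := ih
    obtain ⟨c, hc, hgc⟩ : ∃ c ∈ ball (0 : ℂ) 1, g c = 0 := by
      by_contra! h0
      obtain ⟨l, hl, hgl⟩ := hg.exists_eqOn_const h0
      exact hfB ⟨n, l, a, hl, fun k => mem_ball_zero_iff.1 (ha k).1,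
        fun z hz => by rw [hfg z hz, hgl hz, mul_comm]; rfl⟩
    obtain ⟨ψ, hψ, hgψ⟩ := hg.exists_blaschkeFactor_mul hc hgc
    refine ⟨Fin.cons c a, ψ,
      Fin.cases ⟨hc, by simp only [Fin.cons_zero, hfg c hc, hgc, mul_zero]⟩ ha, hψ, fun z hz => ?_⟩
    rw [hfg z hz, hgψ z (ball_subset_closedBall hz), Fin.prod_univ_succ]
    simp only [Fin.cons_zero, Fin.cons_succ]
    ring

theorem isFiniteBlaschke (hf : IsContinuousInner f) : IsFiniteBlaschke f := by
  by_contra hfB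
  obtain ⟨r, ⟨hr0, hr1⟩, hr⟩ := hf.exists_zeros_subset_ball
  set z₀ : ℂ := (((1 + r) / 2 : ℝ) : ℂ)
  have hz₀ : ‖z₀‖ = (1 + r) / 2 := by
    rw [norm_real, Real.norm_of_nonneg (by linarith)]
  have hz₀1 : ‖z₀‖ < 1 := by linarith
  have hfz₀ : f z₀ ≠ 0 := fun h => by
    linarith [hr z₀ (mem_ball_zero_iff.2 hz₀1) h]
  set q := 1 - (1 - r ^ 2) * (1 - ‖z₀‖ ^ 2) / 4
  have hq : q < 1 := by
    have : 0 < (1 - r ^ 2) * (1 - ‖z₀‖ ^ 2) := by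
      apply mul_pos <;> nlinarith [norm_nonneg z₀]
    simp only [q]
    linarith
  obtain ⟨n, hn⟩ := exists_pow_lt_of_lt_one (pow_pos (norm_pos_iff.2 hfz₀) 2) hq
  obtain ⟨a, g, ha, hg, hfg⟩ := hf.exists_prod_blaschkeFactor_mul hfB n
  refine hn.not_ge ?_
  calc ‖f z₀‖ ^ 2 = (∏ k, ‖blaschkeFactor (a k) z₀‖ ^ 2) * ‖g z₀‖ ^ 2 := by
        rw [hfg z₀ (mem_ball_zero_iff.2 hz₀1), norm_mul, norm_prod, mul_pow, Finset.prod_pow]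
    _ ≤ ∏ k, ‖blaschkeFactor (a k) z₀‖ ^ 2 :=
        mul_le_of_le_one_right (by positivity)
          (pow_le_one₀ (norm_nonneg _) (hg.norm_le_one (ball_subset_closedBall
            (mem_ball_zero_iff.2 hz₀1))))
    _ ≤ ∏ _k : Fin n, q :=
        Finset.prod_le_prod (fun _ _ => by positivity) fun k _ =>
          norm_blaschkeFactor_sq_le (hr (a k) (ha k).1 (ha k).2).le hr1 hz₀1
    _ = q ^ n := by simp

end IsContinuousInner

theorem exists_continuous_eqOn_of_norm_deriv_le {f : ℂ → ℂ} {s : Set ℂ} {M : ℝ}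
    (hs : Convex ℝ s) (ho : IsOpen s) (hd : DifferentiableOn ℂ f s)
    (hM : ∀ z ∈ s, ‖deriv f z‖ ≤ M) :
    ∃ F : ℂ → ℂ, Continuous F ∧ EqOn F f s := by
  have hlip : LipschitzOnWith M.toNNReal f s :=
    hs.lipschitzOnWith_of_nnnorm_deriv_le (fun z hz => hd.differentiableAt (ho.mem_nhds hz))
      fun z hz => by
        rw [← NNReal.coe_le_coe, coe_nnnorm, Real.coe_toNNReal']
        exact (hM z hz).trans (le_max_left _ _)
  obtain ⟨F, hF, hfF⟩ := hlip.extend_finite_dimension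
  exact ⟨F, hF.continuous, hfF.symm⟩

theorem norm_eq_one_of_ae_tendsto_radial {φ F : ℂ → ℂ} (hF : Continuous F)
    (hFφ : EqOn F φ (ball 0 1))
    (hinner : ∀ᵐ θ : ℝ, Tendsto (fun r : ℝ => ‖φ (r * exp (θ * I))‖)
      (𝓝[<] 1) (𝓝 1)) :
    ∀ z ∈ sphere (0 : ℂ) 1, ‖F z‖ = 1 := by
  have hae : ∀ᵐ θ : ℝ, ‖F (exp (θ * I))‖ = 1 := by
    filter_upwards [hinner] with θ hθ
    set e := exp (θ * I)
    have hray : Tendsto (fun r : ℝ => (r : ℂ) * e) (𝓝[<] 1) (𝓝 e) := by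
      simpa using ((by fun_prop : Continuous fun r : ℝ => (r : ℂ) * e).tendsto 1).mono_left
        nhdsWithin_le_nhds
    refine tendsto_nhds_unique (((hF.tendsto e).comp hray).norm.congr' ?_) hθ
    filter_upwards [Ioo_mem_nhdsLT (zero_lt_one' ℝ)] with r hr
    have hre : ‖(r : ℂ) * e‖ < 1 := by
      rw [norm_mul, norm_exp_ofReal_mul_I, mul_one, norm_real, Real.norm_of_nonneg hr.1.le]
      exact hr.2
    exact congrArg norm (hFφ (mem_ball_zero_iff.2 hre))
  have hconst : (fun θ : ℝ => ‖F (exp (θ * I))‖) = fun _ => 1 :=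
    (Continuous.ae_eq_iff_eq _ (by fun_prop) continuous_const).1 hae
  intro z hz
  have hz' := norm_mul_exp_arg_mul_I z
  rw [mem_sphere_zero_iff_norm.1 hz, ofReal_one, one_mul] at hz'
  simpa [hz'] using congrFun hconst z.arg

theorem stmt_9_general (φ : ℂ → ℂ) (hd : DifferentiableOn ℂ φ unitDisk)
    (hinner : ∀ᵐ (θ : ℝ) ∂(volume : Measure ℝ),
      Tendsto (fun r : ℝ => ‖φ ((r : ℂ) * Complex.exp ((θ : ℂ) * Complex.I))‖)
        (𝓝[<] 1) (𝓝 1))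
    (hbd : ∃ M : ℝ, ∀ z ∈ unitDisk, ‖deriv φ z‖ ≤ M) :
    IsFiniteBlaschke φ := by
  obtain ⟨M, hM⟩ := hbd
  obtain ⟨F, hF, hFφ⟩ :=
    exists_continuous_eqOn_of_norm_deriv_le (convex_ball 0 1) isOpen_ball hd hM
  have hFinner : IsContinuousInner F :=
    ⟨⟨hd.congr hFφ, hF.continuousOn⟩, norm_eq_one_of_ae_tendsto_radial hF hFφ hinner⟩
  exact hFinner.isFiniteBlaschke.congr fun z hz => (hFφ hz).symm

theorem stmt_9 (φ : ℂ → ℂ) (hd : DifferentiableOn ℂ φ unitDisk)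
    (hm : Set.MapsTo φ unitDisk unitDisk)
    (hinner : ∀ᵐ (θ : ℝ) ∂(volume : Measure ℝ),
      Tendsto (fun r : ℝ => ‖φ ((r : ℂ) * Complex.exp ((θ : ℂ) * Complex.I))‖)
        (𝓝[<] 1) (𝓝 1))
    (hbd : ∃ M : ℝ, ∀ z ∈ unitDisk, ‖deriv φ z‖ ≤ M) :
    IsFiniteBlaschke φ :=
  stmt_9_general φ hd hinner hbd
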